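/- arXiv:1809.02500 — 2 statements merged into one kernel-verified Lean document; each statement's English description precedes it below -/
import Mathlib

section
/- Let X be a normal projective variety and M a Q-Cartier Q-divisor. Suppose there is an infinite set S of positive integers and effective integral Weil divisors N_m (m ∈ S), all supported on a common reduced divisor, such that N_p - N_q ∼_Q (p - q)M for all p, q ∈ S. Then κ(X, M) ≥ 0. -/
/-!
Among the multiplicity vectors `N m`, `m ∈ S`, Dickson's lemma gives `p < q` in `S` with
`N p ≤ N q`. Then `(q - p) • M` is `ℚ`-linearly equivalent to `N q - N p`, which is effective.
-/

theorem Set.Infinite.exists_lt_map_le {α : Type*} [Preorder α] [WellQuasiOrderedLE α]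
    {S : Set ℕ} (hS : S.Infinite) (f : ℕ → α) :
    ∃ p ∈ S, ∃ q ∈ S, p < q ∧ f p ≤ f q := by
  classical
  have : Infinite S := hS.to_subtype
  let e := Nat.orderEmbeddingOfSet S
  obtain ⟨m, n, hmn, hle⟩ := wellQuasiOrdered_le (fun k => f (e k))
  exact ⟨e m, Nat.orderEmbeddingOfSet_range S ▸ ⟨m, rfl⟩,
    e n, Nat.orderEmbeddingOfSet_range S ▸ ⟨n, rfl⟩, e.strictMono hmn, hle⟩

theorem kappa_nonneg_of_infinite_family_general {V : Type*} [AddCommGroup V] [Module ℚ V]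
    (P : Submodule ℚ V) (Eff : V → Prop)
    {r : ℕ}
    (ι : (Fin r → ℚ) →ₗ[ℚ] V)
    (hι : ∀ v : Fin r → ℚ, (∀ i, 0 ≤ v i) → Eff (ι v))
    (M : V) (S : Set ℕ) (hS : S.Infinite)
    (N : ℕ → Fin r → ℕ)
    (hrel : ∀ p ∈ S, ∀ q ∈ S,
      (ι (fun i => (N p i : ℚ)) - ι (fun i => (N q i : ℚ)))
        - (((p : ℚ) - (q : ℚ)) • M) ∈ P) :
    ∃ c : ℚ, 0 < c ∧ ∃ E : V, Eff E ∧ c • M - E ∈ P := by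
  obtain ⟨p, hp, q, hq, hpq, hle⟩ := hS.exists_lt_map_le N
  have hEff : Eff ((ι fun i => (N q i : ℚ)) - ι fun i => (N p i : ℚ)) := by
    rw [← map_sub]
    exact hι _ fun i => sub_nonneg.mpr (Nat.cast_le.mpr (hle i))
  refine ⟨q - p, sub_pos.mpr (by exact_mod_cast hpq), _, hEff, ?_⟩
  convert hrel p hp q hq using 1
  module

theorem kappa_nonneg_of_infinite_family {V : Type*} [AddCommGroup V] [Module ℚ V]
    (P : Submodule ℚ V) (Eff : V → Prop)
    {r : ℕ} (hr : 0 < r)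
    (ι : (Fin r → ℚ) →ₗ[ℚ] V)
    (hι : ∀ v : Fin r → ℚ, (∀ i, 0 ≤ v i) → Eff (ι v))
    (M : V) (S : Set ℕ) (hS : S.Infinite)
    (N : ℕ → Fin r → ℕ)
    (hrel : ∀ p ∈ S, ∀ q ∈ S,
      (ι (fun i => (N p i : ℚ)) - ι (fun i => (N q i : ℚ)))
        - (((p : ℚ) - (q : ℚ)) • M) ∈ P) :
    ∃ c : ℚ, 0 < c ∧ ∃ E : V, Eff E ∧ c • M - E ∈ P :=
  kappa_nonneg_of_infinite_family_general P Eff ι hι M S hS N hrel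
end

section
/- Let f : X → Y be a birational morphism between normal projective varieties, D a Q-Cartier Q-divisor on Y, E a pseudoeffective Q-Cartier Q-divisor on X, and G = f^*D + E. Suppose D · C_Y > 0 for every curve C_Y on Y passing through a point of a fixed very general subset U_Y of Y (a countable intersection of dense open subsets) contained in the isomorphism locus of f. Then there is a very general subset U_X of X such that G · C_X > 0 for every curve C_X on X passing through a point of U_X. -/
/-!
STATEMENT 13.  Abstract model of Lemma (nefdim1): `X`, `Y` are the point sets of
normal projective varieties, `f : X → Y` a birational morphism; `CX`, `CY` are
the sets of curves on `X` and `Y`, with point sets `ptsX`, `ptsY`; `img C` is the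
image curve of `C` (relevant for curves meeting the locus where `f` is an
isomorphism); `degG`, `degE`, `degD` are the intersection numbers with
`G = f^*D + E`, `E`, and `D` respectively.  `VGX`, `VGY` are the collections of
very general subsets (countable intersections of dense opens), closed under
binary intersection and under preimage along `f`.  The hypotheses encode:
`D · C_Y > 0` for all curves `C_Y` through a point of the very general set `U_Y`
contained in the isomorphism locus of `f`; pseudoeffectivity of `E`; and the
projection formula `G · C = D · f(C) + E · C` for curves `C` meeting `f⁻¹(U_Y)`.
-/
theorem positivity_of_pullback_sum {X Y : Type*} (f : X → Y)
    {CX CY : Type*}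
    (ptsX : CX → Set X) (ptsY : CY → Set Y)
    (img : CX → CY)
    (degG degE : CX → ℚ) (degD : CY → ℚ)
    (VGX : Set X → Prop) (VGY : Set Y → Prop)
    (VGX_inter : ∀ U U' : Set X, VGX U → VGX U' → VGX (U ∩ U'))
    (VGX_preimage : ∀ U : Set Y, VGY U → VGX (f ⁻¹' U))
    (U_Y : Set Y) (hUY : VGY U_Y)
    (hD : ∀ C : CY, (ptsY C ∩ U_Y).Nonempty → 0 < degD C)
    (hE : ∃ U_E : Set X, VGX U_E ∧ ∀ C : CX, (ptsX C ∩ U_E).Nonempty → 0 ≤ degE C)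
    (hproj : ∀ C : CX, (ptsX C ∩ f ⁻¹' U_Y).Nonempty →
      degG C = degD (img C) + degE C)
    (himg : ∀ C : CX, f '' ptsX C ⊆ ptsY (img C)) :
    ∃ U_X : Set X, VGX U_X ∧ ∀ C : CX, (ptsX C ∩ U_X).Nonempty → 0 < degG C := by
  obtain ⟨U_E, hUE, hEpos⟩ := hE
  refine ⟨f ⁻¹' U_Y ∩ U_E, VGX_inter _ _ (VGX_preimage _ hUY) hUE, ?_⟩
  rintro C ⟨x, hxC, hxU, hxE⟩
  rw [hproj C ⟨x, hxC, hxU⟩]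
  have h1 : 0 < degD (img C) := hD _ ⟨f x, himg C ⟨x, hxC, rfl⟩, hxU⟩
  have h2 : 0 ≤ degE C := hEpos C ⟨x, hxC, hxE⟩
  linarith
end
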